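/- arXiv:2111.08969 — 6 statements merged into one kernel-verified Lean document; each statement's English description precedes it below -/
import Mathlib

section
/- Let s ≥ 1 and a ≥ 0. Let g : ℕ → (Fin s → ℤ) be an addition-machine computation with s registers whose initial values satisfy |g 0 i| ≤ 2^a for every i, and in which every constant used has absolute value at most 2^a. If after t steps some register i satisfies |g t i| ≥ 2^b, then t ≥ b − a. In particular, an addition machine needs at least b − a addition or subtraction operations to produce a number with b binary digits from inputs with at most a binary digits. -/
/-- `g` is an addition-machine computation with `s` registers in which every
integer constant used has absolute value at most `M`: at each step `t`, one
register `i` is updated to the sum or difference of two registers, or to a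
register plus or minus a constant `c` with `|c| ≤ M`, and all other registers
are unchanged. -/
def IsAdditionMachineComputation (s : ℕ) (M : ℤ) (g : ℕ → Fin s → ℤ) : Prop :=
  ∀ t : ℕ, ∃ i : Fin s,
    (∀ l : Fin s, l ≠ i → g (t + 1) l = g t l) ∧
    ((∃ j k : Fin s, g (t + 1) i = g t j + g t k ∨ g (t + 1) i = g t j - g t k) ∨
     (∃ (j : Fin s) (c : ℤ), |c| ≤ M ∧
        (g (t + 1) i = g t j + c ∨ g (t + 1) i = g t j - c)))

theorem addition_machine_needs_b_sub_a_steps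
    (s : ℕ) (hs : 1 ≤ s) (a : ℕ)
    (g : ℕ → Fin s → ℤ)
    (hg : IsAdditionMachineComputation s ((2 : ℤ) ^ a) g)
    (h0 : ∀ i : Fin s, |g 0 i| ≤ (2 : ℤ) ^ a)
    (b t : ℕ) (i : Fin s)
    (ht : (2 : ℤ) ^ b ≤ |g t i|) :
    b - a ≤ t := by
  have key : ∀ t : ℕ, ∀ i : Fin s, |g t i| ≤ (2 : ℤ) ^ (a + t) := by
    intro t
    induction t with
    | zero => simpa using h0
    | succ n ih =>
      intro i
      have hmono : (2 : ℤ) ^ (a + n) ≤ (2 : ℤ) ^ (a + (n + 1)) :=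
        pow_le_pow_right₀ (by norm_num) (by omega)
      have hsum : (2 : ℤ) ^ (a + n) + (2 : ℤ) ^ (a + n) = (2 : ℤ) ^ (a + (n + 1)) := by
        rw [show a + (n + 1) = (a + n) + 1 by omega]; ring
      obtain ⟨i', hother, hcase⟩ := hg n
      by_cases hi : i = i'
      · subst hi
        rcases hcase with ⟨j, k, h | h⟩ | ⟨j, c, hc, h | h⟩
        · rw [h]
          calc |g n j + g n k| ≤ |g n j| + |g n k| := abs_add_le _ _
            _ ≤ (2 : ℤ) ^ (a + n) + (2 : ℤ) ^ (a + n) := add_le_add (ih j) (ih k)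
            _ = _ := hsum
        · rw [h]
          calc |g n j - g n k| ≤ |g n j| + |g n k| := abs_sub _ _
            _ ≤ (2 : ℤ) ^ (a + n) + (2 : ℤ) ^ (a + n) := add_le_add (ih j) (ih k)
            _ = _ := hsum
        · rw [h]
          calc |g n j + c| ≤ |g n j| + |c| := abs_add_le _ _
            _ ≤ (2 : ℤ) ^ (a + n) + (2 : ℤ) ^ (a + n) :=
              add_le_add (ih j) (hc.trans (pow_le_pow_right₀ (by norm_num) (by omega)))
            _ = _ := hsum
        · rw [h]
          calc |g n j - c| ≤ |g n j| + |c| := abs_sub _ _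
            _ ≤ (2 : ℤ) ^ (a + n) + (2 : ℤ) ^ (a + n) :=
              add_le_add (ih j) (hc.trans (pow_le_pow_right₀ (by norm_num) (by omega)))
            _ = _ := hsum
      · rw [hother i hi]; exact (ih i).trans hmono
  have hb : (2 : ℤ) ^ b ≤ (2 : ℤ) ^ (a + t) := ht.trans (key t i)
  have : b ≤ a + t := by
    exact_mod_cast (pow_le_pow_iff_right₀ (by norm_num : (1:ℤ) < 2)).mp hb
  omega
end

section
/- Let s ≥ 1, a ≥ 1 and y ≥ 1. Let g : ℕ → (Fin s → ℤ) be an addition-machine computation with s registers whose initial values satisfy |g 0 i| ≤ 2^a for every i, and in which every constant used has absolute value at most 2^a. If after t steps some register i satisfies |g t i| ≥ 2^(a·y), then t ≥ a·(y − 1). (This is the counting core of the negative answer to Floyd and Knuth's Open Problem (3) under Definition (a) of the little-oh calculus: starting from the input x = 2^(m/(y+1)), producing the output x^y = 2^(m·y/(y+1)) requires at least m·(y−1)/(y+1) additions.) -/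
namespace IsAdditionMachineComputation

variable {s : ℕ} {M B : ℤ} {g : ℕ → Fin s → ℤ}

theorem abs_succ_le_two_mul (hg : IsAdditionMachineComputation s M g) (hM : M ≤ B) (t : ℕ)
    (hB : ∀ l, |g t l| ≤ B) (l : Fin s) : |g (t + 1) l| ≤ 2 * B := by
  obtain ⟨i, hother, hstep⟩ := hg t
  by_cases hl : l = i
  · subst hl
    rw [two_mul]
    rcases hstep with ⟨j, k, h | h⟩ | ⟨j, c, hc, h | h⟩ <;> rw [h]
    · exact (abs_add_le _ _).trans (add_le_add (hB j) (hB k))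
    · exact (abs_sub _ _).trans (add_le_add (hB j) (hB k))
    · exact (abs_add_le _ _).trans (add_le_add (hB j) (hc.trans hM))
    · exact (abs_sub _ _).trans (add_le_add (hB j) (hc.trans hM))
  · rw [hother l hl]
    linarith [hB l, abs_nonneg (g t l)]

theorem abs_le_two_pow_mul (hg : IsAdditionMachineComputation s M g) (hM : M ≤ B)
    (h0 : ∀ l, |g 0 l| ≤ B) (t : ℕ) (l : Fin s) : |g t l| ≤ 2 ^ t * B := by
  have hB : 0 ≤ B := (abs_nonneg _).trans (h0 l)
  induction t generalizing l with
  | zero => simpa using h0 l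
  | succ t ih =>
    have hM' : M ≤ 2 ^ t * B := hM.trans (le_mul_of_one_le_left hB (one_le_pow₀ one_le_two))
    rw [pow_succ', mul_assoc]
    exact hg.abs_succ_le_two_mul hM' t ih l

end IsAdditionMachineComputation

theorem addition_machine_powering_lower_bound_general
    (s : ℕ) (a : ℕ) (y : ℕ)
    (g : ℕ → Fin s → ℤ)
    (hg : IsAdditionMachineComputation s ((2 : ℤ) ^ a) g)
    (h0 : ∀ i : Fin s, |g 0 i| ≤ (2 : ℤ) ^ a)
    (t : ℕ) (i : Fin s)
    (ht : (2 : ℤ) ^ (a * y) ≤ |g t i|) :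
    a * (y - 1) ≤ t := by
  have hpow : (2 : ℤ) ^ (a * y) ≤ 2 ^ (t + a) := by
    rw [pow_add]
    exact ht.trans (hg.abs_le_two_pow_mul le_rfl h0 t i)
  have hexp : a * y ≤ t + a := (pow_le_pow_iff_right₀ one_lt_two).mp hpow
  rw [Nat.mul_sub_one]
  omega

theorem addition_machine_powering_lower_bound
    (s : ℕ) (hs : 1 ≤ s) (a : ℕ) (ha : 1 ≤ a) (y : ℕ) (hy : 1 ≤ y)
    (g : ℕ → Fin s → ℤ)
    (hg : IsAdditionMachineComputation s ((2 : ℤ) ^ a) g)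
    (h0 : ∀ i : Fin s, |g 0 i| ≤ (2 : ℤ) ^ a)
    (t : ℕ) (i : Fin s)
    (ht : (2 : ℤ) ^ (a * y) ≤ |g t i|) :
    a * (y - 1) ≤ t :=
  addition_machine_powering_lower_bound_general s a y g hg h0 t i ht
end

section
/- Under Definition (a) of the multivariate big-Oh calculus, it makes a difference whether the natural numbers start with 0 or with 1: (i) there exists a constant c > 0 such that m + n ≤ c·m·n for all natural numbers m, n ≥ 1; but (ii) there do not exist constants c > 0 and d such that m + n ≤ c·m·n for all natural numbers m, n with m ≥ d or n ≥ d. -/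
theorem bigOh_definition_a_sensitive_to_start_of_naturals :
    (∃ c : ℝ, 0 < c ∧ ∀ m n : ℕ, 1 ≤ m → 1 ≤ n → (m + n : ℝ) ≤ c * m * n) ∧
    ¬ ∃ c : ℝ, 0 < c ∧ ∃ d : ℕ, ∀ m n : ℕ, (d ≤ m ∨ d ≤ n) → (m + n : ℝ) ≤ c * m * n := by
  constructor
  · refine ⟨2, by norm_num, fun m n hm hn => ?_⟩
    have hm' : (1 : ℝ) ≤ m := by exact_mod_cast hm
    have hn' : (1 : ℝ) ≤ n := by exact_mod_cast hn
    nlinarith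
  · rintro ⟨c, hc, d, h⟩
    have := h (d + 1) 0 (Or.inl (Nat.le_succ d))
    push_cast at this
    linarith [Nat.cast_nonneg (α := ℝ) d]
end

section
/- The language over the alphabet Fin 2 consisting of all words 1 0^(k−1) 1 0^(k+1) for k ≥ 1, i.e. L = { [1] ++ List.replicate (k−1) 0 ++ [1] ++ List.replicate (k+1) 0 | k : ℕ, k ≥ 1 }, is not a regular language. -/
lemma rep_one_rep_inj : ∀ (a c b d : ℕ),
    (List.replicate a (0 : Fin 2) ++ 1 :: List.replicate b 0) =
      (List.replicate c 0 ++ 1 :: List.replicate d 0) → a = c ∧ b = d := by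
  intro a
  induction a with
  | zero =>
    intro c b d h
    cases c with
    | zero =>
      simp at h
      exact ⟨rfl, h⟩
    | succ c =>
      simp [List.replicate_succ] at h
  | succ a ih =>
    intro c b d h
    cases c with
    | zero => simp [List.replicate_succ] at h
    | succ c =>
      simp only [List.replicate_succ, List.cons_append, List.cons.injEq] at h
      obtain ⟨h1, h2⟩ := ih c b d h.2
      exact ⟨by omega, h2⟩

theorem middle_one_language_not_regular :
    ¬ Language.IsRegular
        { w : List (Fin 2) | ∃ k : ℕ, 1 ≤ k ∧
            w = [1] ++ List.replicate (k - 1) 0 ++ [1] ++ List.replicate (k + 1) 0 } := by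
  rintro ⟨σ, _, M, hM⟩
  set f : ℕ → σ := fun m => M.evalFrom M.start ([1] ++ List.replicate m 0) with hf
  obtain ⟨m, m', hne, heq⟩ := Finite.exists_ne_map_eq_of_infinite f
  -- w_m = [1] ++ rep m 0 ++ [1] ++ rep (m+2) 0 is in the language (k = m+1)
  have hmem : ([1] ++ List.replicate m 0 ++ [1] ++ List.replicate (m + 2) 0) ∈ M.accepts := by
    rw [hM]
    exact ⟨m + 1, by omega, by simp⟩
  have hmem' : ([1] ++ List.replicate m' 0 ++ [1] ++ List.replicate (m + 2) 0) ∈ M.accepts := by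
    rw [DFA.mem_accepts] at hmem ⊢
    have e : ∀ n, M.eval ([1] ++ List.replicate n 0 ++ [1] ++ List.replicate (m + 2) 0)
        = M.evalFrom (f n) ([1] ++ List.replicate (m + 2) 0) := by
      intro n
      show M.evalFrom M.start _ = _
      rw [List.append_assoc, M.evalFrom_of_append]
    rw [e] at hmem ⊢
    rw [← heq]
    exact hmem
  rw [hM] at hmem'
  obtain ⟨k, hk, hw⟩ := hmem'
  simp only [List.cons_append, List.nil_append, List.cons.injEq, List.singleton_append] at hw
  obtain ⟨ha, hb⟩ := rep_one_rep_inj m' (k - 1) (m + 2) (k + 1) (by simpa [List.append_assoc] using hw.2)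
  omega
end

section
/- Define f : ℕ → ℕ on inputs x ≥ 2 by f(x) = 2^(Nat.clog 2 x) · x (so f(x) = 2^k · x for the unique k ≥ 1 with 2^(k−1) < x ≤ 2^k). Then for every x ≥ 2: if f(x+2) − f(x+1) = f(x+1) − f(x), then f(x+1) − f(x) is a power of 2, i.e. there exists j with f(x+1) − f(x) = 2^j. -/
/-!
Write `g n = 2 ^ ⌈log₂ n⌉ * n`. The exponent is constant on each block `2 ^ (k - 1) < n ≤ 2 ^ k`,
so `g (n + 1) - g n = 2 ^ ⌈log₂ n⌉` is a power of two unless `n = 2 ^ k` ends its block. In that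
case the exponent jumps at `n + 1`, giving `g (n + 1) - g n = 2 ^ k * 2 ^ k + 2 ^ (k + 1)`, whereas
`g (n + 2) - g (n + 1) = 2 ^ (k + 1)` once `k ≥ 1`, so the two differences cannot agree.
-/

theorem Nat.clog_eq_succ_of_pow_lt_of_le {b k n : ℕ} (hb : 1 < b) (hlt : b ^ k < n)
    (hle : n ≤ b ^ (k + 1)) : Nat.clog b n = k + 1 :=
  le_antisymm (Nat.clog_le_of_le_pow hle) ((Nat.lt_clog_iff_pow_lt hb).2 hlt)

def powClogMul (n : ℕ) : ℕ := 2 ^ Nat.clog 2 n * n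

theorem powClogMul_succ_sub_of_ne {n : ℕ} (hn : 2 ^ Nat.clog 2 n ≠ n) :
    powClogMul (n + 1) - powClogMul n = 2 ^ Nat.clog 2 n := by
  rw [powClogMul, powClogMul, ← (Nat.clog_eq_clog_succ_iff one_lt_two).2 hn, mul_add_one,
    Nat.add_sub_cancel_left]

theorem powClogMul_two_pow_succ_sub (k : ℕ) :
    powClogMul (2 ^ k + 1) - powClogMul (2 ^ k) = 2 ^ k * 2 ^ k + 2 ^ (k + 1) := by
  have hclog : Nat.clog 2 (2 ^ k + 1) = k + 1 :=
    Nat.clog_eq_succ_of_pow_lt_of_le one_lt_two (Nat.lt_succ_self _)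
      (by rw [pow_succ]; linarith [Nat.one_le_two_pow (n := k)])
  rw [powClogMul, powClogMul, hclog, Nat.clog_pow 2 k one_lt_two, pow_succ]
  ring_nf
  omega

theorem powClogMul_two_pow_add_two_sub {k : ℕ} (hk : k ≠ 0) :
    powClogMul (2 ^ k + 2) - powClogMul (2 ^ k + 1) = 2 ^ (k + 1) := by
  have htwo : 2 ≤ 2 ^ k := Nat.le_self_pow hk 2
  have hclog (m : ℕ) (hm₁ : 1 ≤ m) (hm₂ : m ≤ 2) : Nat.clog 2 (2 ^ k + m) = k + 1 :=
    Nat.clog_eq_succ_of_pow_lt_of_le one_lt_two (by omega) (by rw [pow_succ]; omega)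
  rw [powClogMul, powClogMul, hclog 1 le_rfl one_le_two, hclog 2 one_le_two le_rfl]
  ring_nf
  omega

theorem difference_equal_implies_power_of_two (x : ℕ) (hx : 2 ≤ x)
    (f : ℕ → ℕ) (hf : ∀ n, f n = 2 ^ Nat.clog 2 n * n)
    (h : f (x + 2) - f (x + 1) = f (x + 1) - f x) :
    ∃ j : ℕ, f (x + 1) - f x = 2 ^ j := by
  obtain rfl : f = powClogMul := funext hf
  by_cases hpow : 2 ^ Nat.clog 2 x = x
  · obtain ⟨k, rfl⟩ : ∃ k, x = 2 ^ k := ⟨_, hpow.symm⟩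
    have hk : k ≠ 0 := by
      rintro rfl
      norm_num at hx
    rw [powClogMul_two_pow_add_two_sub hk, powClogMul_two_pow_succ_sub] at h
    have : 0 < 2 ^ k * 2 ^ k := by positivity
    omega
  · exact ⟨_, powClogMul_succ_sub_of_ne hpow⟩
end

section
/- Define f : ℕ → ℕ on inputs x ≥ 2 by f(x) = 2^(Nat.clog 2 x) · x (so f(x) = 2^k · x for the unique k ≥ 1 with 2^(k−1) < x ≤ 2^k). Then for every x ≥ 3: x is a power of 2 if and only if f(x+1) − f(x) > f(x) − f(x−1). -/
/-!
Write `g n = 2 ^ clog 2 n * n`. Away from powers of two, `clog` is constant on `{x, x + 1}` and can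
only drop at `x - 1`, so `g (x + 1) - g x = 2 ^ clog x ≤ g x - g (x - 1)`. At `x = 2 ^ j` the
factor jumps from `2 ^ j` to `2 ^ (j + 1)`, so `g (x + 1) - g x` exceeds `g x` itself. The argument
works in any base `b ≥ 2`.
-/

namespace Nat

def clogScale (b n : ℕ) : ℕ := b ^ clog b n * n

variable {b : ℕ}

theorem clogScale_add_one_sub_of_ne_pow (hb : 1 < b) {n : ℕ} (hn : ∀ k, n ≠ b ^ k) :
    clogScale b (n + 1) - clogScale b n = b ^ clog b n := by
  have hclog : clog b n = clog b (n + 1) :=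
    (clog_eq_clog_succ_iff hb).2 (hn _).symm
  rw [clogScale, clogScale, ← hclog, mul_add_one, Nat.add_sub_cancel_left]

theorem pow_clog_le_clogScale_sub_clogScale_sub_one (hb : 1 < b) {n : ℕ} (hn : n ≠ 0) :
    b ^ clog b n ≤ clogScale b n - clogScale b (n - 1) := by
  have hprev : clogScale b (n - 1) ≤ b ^ clog b n * (n - 1) :=
    Nat.mul_le_mul_right _ (Nat.pow_le_pow_right hb.le (clog_mono_right b (n.sub_le 1)))
  have hcur : clogScale b n = b ^ clog b n * (n - 1) + b ^ clog b n := by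
    rw [clogScale, ← mul_add_one, Nat.sub_add_cancel (Nat.one_le_iff_ne_zero.2 hn)]
  omega

theorem clogScale_pow_lt_clogScale_pow_add_one_sub (hb : 1 < b) (j : ℕ) :
    clogScale b (b ^ j) < clogScale b (b ^ j + 1) - clogScale b (b ^ j) := by
  have hjump : j + 1 ≤ clog b (b ^ j + 1) := (lt_clog_iff_pow_lt hb).2 (Nat.lt_succ_self _)
  have hpos : 0 < b ^ j := Nat.pow_pos (by omega)
  have hnext : b * (b ^ j * (b ^ j + 1)) ≤ clogScale b (b ^ j + 1) := by
    rw [clogScale, ← mul_assoc, ← pow_succ']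
    exact Nat.mul_le_mul_right _ (Nat.pow_le_pow_right hb.le hjump)
  have hcur : clogScale b (b ^ j) = b ^ j * b ^ j := by rw [clogScale, clog_pow b j hb]
  have hdouble : 2 * (b ^ j * (b ^ j + 1)) ≤ b * (b ^ j * (b ^ j + 1)) :=
    Nat.mul_le_mul_right _ hb
  rw [hcur]
  have hbig : 2 * (b ^ j * b ^ j) < clogScale b (b ^ j + 1) := by nlinarith
  omega

end Nat

theorem power_of_two_iff_difference_increase (x : ℕ) (hx : 3 ≤ x)
    (f : ℕ → ℕ) (hf : ∀ n, f n = 2 ^ Nat.clog 2 n * n) :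
    (∃ j : ℕ, x = 2 ^ j) ↔ f (x + 1) - f x > f x - f (x - 1) := by
  obtain rfl : f = Nat.clogScale 2 := funext hf
  constructor
  · rintro ⟨j, rfl⟩
    exact (Nat.sub_le _ _).trans_lt (Nat.clogScale_pow_lt_clogScale_pow_add_one_sub one_lt_two j)
  · intro hincrease
    by_contra hnot
    push Not at hnot
    have hflat := Nat.clogScale_add_one_sub_of_ne_pow one_lt_two hnot
    have hdrop := Nat.pow_clog_le_clogScale_sub_clogScale_sub_one one_lt_two (by omega : x ≠ 0)
    omega
end
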